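/- arXiv:math/0207216 — 4 statements merged into one kernel-verified Lean document; each statement's English description precedes it below -/
import Mathlib

section
/- Two Lagrangian planes ℓ and ℓ' with Souriau images w = w(ℓ), w' = w(ℓ') are transversal (ℓ ∩ ℓ' = 0) if and only if det(w(w')^{−1} − I) ≠ 0, i.e. if and only if 1 is not an eigenvalue of w(w')^{−1}. -/
open Matrix

section SouriauAux

variable {n : ℕ}

private lemma mc_transpose (A : Matrix (Fin n) (Fin n) ℂ) :
    (A.map (starRingEnd ℂ))ᵀ = Aᴴ := rfl

private lemma star_mulVec' (A : Matrix (Fin n) (Fin n) ℂ) (v : Fin n → ℂ) :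
    star (A *ᵥ v) = (A.map (starRingEnd ℂ)) *ᵥ (star v) := by
  funext i
  simp [Matrix.mulVec, dotProduct, Matrix.map_apply, star_sum, star_mul']

private lemma mc_mc (A : Matrix (Fin n) (Fin n) ℂ) :
    (A.map (starRingEnd ℂ)).map (starRingEnd ℂ) = A := by
  funext i j; simp [Matrix.map_apply]

private lemma tr_mul_mc (U : Matrix (Fin n) (Fin n) ℂ) (h1 : Uᴴ * U = 1) :
    Uᵀ * U.map (starRingEnd ℂ) = 1 := by
  have h := congrArg Matrix.transpose h1
  rw [Matrix.transpose_mul, Matrix.transpose_one] at h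
  rwa [← mc_transpose, Matrix.transpose_transpose] at h

private lemma mc_mul_tr (U : Matrix (Fin n) (Fin n) ℂ) (h2 : U * Uᴴ = 1) :
    U.map (starRingEnd ℂ) * Uᵀ = 1 := by
  have h := congrArg Matrix.transpose h2
  rw [Matrix.transpose_mul, Matrix.transpose_one] at h
  rwa [← mc_transpose, Matrix.transpose_transpose] at h

private lemma mc_tr (U : Matrix (Fin n) (Fin n) ℂ) :
    Uᵀ.map (starRingEnd ℂ) = Uᴴ := by
  rw [Matrix.transpose_map, mc_transpose]

private lemma mc_w (U : Matrix (Fin n) (Fin n) ℂ) :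
    (U * Uᵀ).map (starRingEnd ℂ)
      = U.map (starRingEnd ℂ) * (U.map (starRingEnd ℂ))ᵀ := by
  rw [Matrix.map_mul, Matrix.transpose_map]

private lemma w_mul_mcw (U : Matrix (Fin n) (Fin n) ℂ) (h1 : Uᴴ * U = 1) (h2 : U * Uᴴ = 1) :
    (U * Uᵀ) * ((U * Uᵀ).map (starRingEnd ℂ)) = 1 := by
  rw [mc_w, mc_transpose, mul_assoc U Uᵀ _, ← mul_assoc Uᵀ, tr_mul_mc U h1, one_mul, h2]

private lemma w_mul_mc (U : Matrix (Fin n) (Fin n) ℂ) (h1 : Uᴴ * U = 1) :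
    (U * Uᵀ) * U.map (starRingEnd ℂ) = U := by
  rw [mul_assoc, tr_mul_mc U h1, mul_one]

private lemma hUW (U : Matrix (Fin n) (Fin n) ℂ) (h1 : Uᴴ * U = 1) :
    Uᴴ * (U * Uᵀ) = Uᵀ := by
  rw [← mul_assoc, h1, one_mul]

private lemma w_star_image (U : Matrix (Fin n) (Fin n) ℂ) (h1 : Uᴴ * U = 1)
    (x : Fin n → ℂ) (hx : star x = -x) :
    (U * Uᵀ) *ᵥ (star (U *ᵥ x)) = -(U *ᵥ x) := by
  rw [star_mulVec', hx, Matrix.mulVec_mulVec, w_mul_mc U h1, Matrix.mulVec_neg]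

private lemma re_zero_of_star_eq_neg (x : Fin n → ℂ) (h : star x = -x) :
    ∀ j, (x j).re = 0 := by
  intro j
  have h2 : star (x j) = -(x j) := congrFun h j
  have h3 := congrArg Complex.re h2
  simp only [Complex.star_def, Complex.conj_re, Complex.neg_re] at h3
  linarith

private lemma star_eq_neg_of_re_zero (x : Fin n → ℂ) (h : ∀ j, (x j).re = 0) :
    star x = -x := by
  funext j
  simp only [Pi.star_apply, Pi.neg_apply, Complex.star_def]
  apply Complex.ext <;> simp [h j]

end SouriauAux

/-- Two Lagrangian planes `ℓ = u(ℝ^n_p)`, `ℓ' = u'(ℝ^n_p)` (identifying `ℝ^{2n} ≅ ℂ^n`,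
with `ℝ^n_p` the purely imaginary vectors) with Souriau images `w = u uᵀ`, `w' = u' u'ᵀ`
are transversal (`ℓ ∩ ℓ' = 0`) if and only if `det(w (w')⁻¹ − I) ≠ 0`. -/
theorem lagrangian_transversal_iff_det_ne_zero (n : ℕ)
    (u u' : Matrix.unitaryGroup (Fin n) ℂ) :
    ((fun v => (u : Matrix (Fin n) (Fin n) ℂ).mulVec v) ''
        {v : Fin n → ℂ | ∀ j, (v j).re = 0}
      ∩ (fun v => (u' : Matrix (Fin n) (Fin n) ℂ).mulVec v) ''
        {v : Fin n → ℂ | ∀ j, (v j).re = 0}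
      = {0})
    ↔ Matrix.det (((u : Matrix (Fin n) (Fin n) ℂ) * (u : Matrix (Fin n) (Fin n) ℂ)ᵀ)
        * (((u' : Matrix (Fin n) (Fin n) ℂ) * (u' : Matrix (Fin n) (Fin n) ℂ)ᵀ))⁻¹ - 1) ≠ 0 := by
  classical
  set U : Matrix (Fin n) (Fin n) ℂ := (u : Matrix (Fin n) (Fin n) ℂ) with hUdef
  set U' : Matrix (Fin n) (Fin n) ℂ := (u' : Matrix (Fin n) (Fin n) ℂ) with hU'def
  have h1 : Uᴴ * U = 1 := by
    have := u.2.1; rwa [Matrix.star_eq_conjTranspose] at this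
  have h2 : U * Uᴴ = 1 := by
    have := u.2.2; rwa [Matrix.star_eq_conjTranspose] at this
  have h1' : U'ᴴ * U' = 1 := by
    have := u'.2.1; rwa [Matrix.star_eq_conjTranspose] at this
  have h2' : U' * U'ᴴ = 1 := by
    have := u'.2.2; rwa [Matrix.star_eq_conjTranspose] at this
  have hdetU' : IsUnit U'.det := Matrix.UnitaryGroup.det_isUnit u'
  have hdetW' : IsUnit (U' * U'ᵀ).det := by
    rw [Matrix.det_mul, Matrix.det_transpose]; exact hdetU'.mul hdetU'
  have hfactor : U * Uᵀ * (U' * U'ᵀ)⁻¹ - 1 = (U * Uᵀ - U' * U'ᵀ) * (U' * U'ᵀ)⁻¹ := by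
    rw [Matrix.sub_mul, Matrix.mul_nonsing_inv _ hdetW']
  have hdetinv : ((U' * U'ᵀ)⁻¹).det ≠ 0 :=
    left_ne_zero_of_mul_eq_one (Matrix.det_nonsing_inv_mul_det _ hdetW')
  have hdetiff : (U * Uᵀ * (U' * U'ᵀ)⁻¹ - 1).det ≠ 0 ↔ (U * Uᵀ - U' * U'ᵀ).det ≠ 0 := by
    rw [hfactor, Matrix.det_mul]
    constructor
    · intro h hc; exact h (by rw [hc, zero_mul])
    · intro h; exact mul_ne_zero h hdetinv
  rw [hdetiff]
  have hker : (U * Uᵀ - U' * U'ᵀ).det = 0 ↔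
      ∃ v, v ≠ 0 ∧ (U * Uᵀ) *ᵥ v = (U' * U'ᵀ) *ᵥ v := by
    rw [← Matrix.exists_mulVec_eq_zero_iff]
    constructor
    · rintro ⟨v, hv, hv0⟩
      exact ⟨v, hv, by rwa [Matrix.sub_mulVec, sub_eq_zero] at hv0⟩
    · rintro ⟨v, hv, hveq⟩
      exact ⟨v, hv, by rw [Matrix.sub_mulVec, hveq, sub_self]⟩
  constructor
  · -- transversal → det ≠ 0
    intro hset hdet0
    obtain ⟨v, hv, hveq⟩ := hker.mp hdet0
    have hWmc := w_mul_mcw U h1 h2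
    have hWmc' := w_mul_mcw U' h1' h2'
    set σ : Fin n → ℂ := ((U * Uᵀ).map (starRingEnd ℂ)) *ᵥ (star v) with hσdef
    have hconj : σ = ((U' * U'ᵀ).map (starRingEnd ℂ)) *ᵥ (star v) := by
      rw [hσdef, ← star_mulVec', ← star_mulVec', hveq]
    have hWσ : (U * Uᵀ) *ᵥ σ = star v := by
      rw [hσdef, Matrix.mulVec_mulVec, hWmc, Matrix.one_mulVec]
    have hW'σ : (U' * U'ᵀ) *ᵥ σ = star v := by
      rw [hconj, Matrix.mulVec_mulVec, hWmc', Matrix.one_mulVec]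
    have hstarσ : star σ = (U * Uᵀ) *ᵥ v := by
      rw [hσdef, star_mulVec', mc_mc, star_star]
    have hexists : ∃ v₀ : Fin n → ℂ, v₀ ≠ 0 ∧ star v₀ = (U * Uᵀ) *ᵥ v₀ ∧
        star v₀ = (U' * U'ᵀ) *ᵥ v₀ := by
      by_cases hvs : v + σ = 0
      · -- σ = -v : take v₀ = I • v
        have hσv : σ = -v := by
          rw [add_comm] at hvs; exact eq_neg_of_add_eq_zero_left hvs
        have hstv : star v = -((U * Uᵀ) *ᵥ v) := by
          rw [← hWσ, hσv, Matrix.mulVec_neg]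
        have hstv' : star v = -((U' * U'ᵀ) *ᵥ v) := by rw [hstv, hveq]
        refine ⟨Complex.I • v, smul_ne_zero Complex.I_ne_zero hv, ?_, ?_⟩
        · rw [star_smul, Complex.star_def, Complex.conj_I, hstv,
            Matrix.mulVec_smul, smul_neg, neg_smul, neg_neg]
        · rw [star_smul, Complex.star_def, Complex.conj_I, hstv',
            Matrix.mulVec_smul, smul_neg, neg_smul, neg_neg]
      · refine ⟨v + σ, hvs, ?_, ?_⟩
        · rw [star_add, hstarσ, ← hWσ, Matrix.mulVec_add]
          exact add_comm _ _
        · rw [star_add, hstarσ, hveq, ← hW'σ, Matrix.mulVec_add, add_comm]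
      
    obtain ⟨v₀, hv₀, hfix, hfix'⟩ := hexists
    have hstv₀ : star v₀ ≠ 0 := fun h => hv₀ (by rw [← star_star v₀, h, star_zero])
    have hzne : Complex.I • star v₀ ≠ 0 := smul_ne_zero Complex.I_ne_zero hstv₀
    have hx : star (Complex.I • (Uᵀ *ᵥ v₀)) = -(Complex.I • (Uᵀ *ᵥ v₀)) := by
      rw [star_smul, Complex.star_def, Complex.conj_I, star_mulVec', mc_tr, hfix,
        Matrix.mulVec_mulVec, hUW U h1, neg_smul]
    have hy : star (Complex.I • (U'ᵀ *ᵥ v₀)) = -(Complex.I • (U'ᵀ *ᵥ v₀)) := by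
      rw [star_smul, Complex.star_def, Complex.conj_I, star_mulVec', mc_tr, hfix',
        Matrix.mulVec_mulVec, hUW U' h1', neg_smul]
    have hz : U *ᵥ (Complex.I • (Uᵀ *ᵥ v₀)) = Complex.I • star v₀ := by
      rw [Matrix.mulVec_smul, Matrix.mulVec_mulVec, ← hfix]
    have hz' : U' *ᵥ (Complex.I • (U'ᵀ *ᵥ v₀)) = Complex.I • star v₀ := by
      rw [Matrix.mulVec_smul, Matrix.mulVec_mulVec, ← hfix']
    have hmem : Complex.I • star v₀ ∈
        ((fun v => U.mulVec v) '' {v : Fin n → ℂ | ∀ j, (v j).re = 0}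
          ∩ (fun v => U'.mulVec v) '' {v : Fin n → ℂ | ∀ j, (v j).re = 0}) :=
      ⟨⟨Complex.I • (Uᵀ *ᵥ v₀), re_zero_of_star_eq_neg _ hx, hz⟩,
       ⟨Complex.I • (U'ᵀ *ᵥ v₀), re_zero_of_star_eq_neg _ hy, hz'⟩⟩
    rw [hset] at hmem
    exact hzne hmem
  · intro hdet
    ext z
    simp only [Set.mem_inter_iff, Set.mem_image, Set.mem_setOf_eq, Set.mem_singleton_iff]
    constructor
    · rintro ⟨⟨x, hx, rfl⟩, ⟨y, hy, hyz⟩⟩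
      by_contra hz
      apply hdet
      apply hker.mpr
      refine ⟨star (U *ᵥ x), fun h => hz (by rw [← star_star (U *ᵥ x), h, star_zero]), ?_⟩
      rw [w_star_image U h1 x (star_eq_neg_of_re_zero x hx), ← hyz,
        w_star_image U' h1' y (star_eq_neg_of_re_zero y hy)]
    · rintro rfl
      exact ⟨⟨0, fun j => by simp, by simp⟩, ⟨0, fun j => by simp, by simp⟩⟩
end

section
/- Any function m defined on pairs (ℓ_∞, ℓ'_∞) with ℓ ∩ ℓ' = 0 satisfying m(ℓ_∞,ℓ'_∞) − m(ℓ_∞,ℓ''_∞) + m(ℓ'_∞,ℓ''_∞) = f(ℓ,ℓ',ℓ'') for a 2-cocycle f on Λ(n), extends unambiguously to all pairs by the formula m(ℓ_∞,ℓ'_∞) = m(ℓ_∞,ℓ''_∞) − m(ℓ'_∞,ℓ''_∞) + f(ℓ,ℓ',ℓ''): the right-hand side is independent of the choice of ℓ''_∞ with ℓ'' transversal to both ℓ and ℓ'. -/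
/-- (Leray index extension lemma.) Let `p : Λ_∞ → Λ` be the covering projection of the
Lagrangian Grassmannian, `trans` the transversality relation (`ℓ ∩ ℓ' = 0`), and
`f : Λ³ → ℤ` a 2-cocycle (`∂f = 0`). If `m`, defined on pairs with transversal
projections, satisfies `m(ℓ_∞,ℓ'_∞) − m(ℓ_∞,ℓ''_∞) + m(ℓ'_∞,ℓ''_∞) = f(ℓ,ℓ',ℓ'')` on
pairwise transversal triples, then the extension formula
`m(ℓ_∞,ℓ'_∞) = m(ℓ_∞,ℓ''_∞) − m(ℓ'_∞,ℓ''_∞) + f(ℓ,ℓ',ℓ'')` is unambiguous: its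
right-hand side does not depend on the choice of `ℓ''_∞` with `ℓ''` transversal to
both `ℓ` and `ℓ'`. -/
theorem leray_index_extension_well_defined {Λinf Λ : Type*}
    (p : Λinf → Λ) (hsurj : Function.Surjective p)
    (trans : Λ → Λ → Prop)
    (hsymm : ∀ l l', trans l l' → trans l' l)
    (hexist : ∀ l₁ l₂ l₃ l₄ : Λ, ∃ l, trans l l₁ ∧ trans l l₂ ∧ trans l l₃ ∧ trans l l₄)
    (f : Λ → Λ → Λ → ℤ)
    (hcocycle : ∀ l₀ l₁ l₂ l₃, f l₁ l₂ l₃ - f l₀ l₂ l₃ + f l₀ l₁ l₃ - f l₀ l₁ l₂ = 0)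
    (m : Λinf → Λinf → ℤ)
    (hm : ∀ a b c : Λinf, trans (p a) (p b) → trans (p a) (p c) → trans (p b) (p c) →
      m a b - m a c + m b c = f (p a) (p b) (p c)) :
    ∀ a b c c' : Λinf,
      trans (p a) (p c) → trans (p b) (p c) → trans (p a) (p c') → trans (p b) (p c') →
      m a c - m b c + f (p a) (p b) (p c) = m a c' - m b c' + f (p a) (p b) (p c') := by
  intro a b c c' hac hbc hac' hbc'
  obtain ⟨l, hl1, hl2, hl3, hl4⟩ := hexist (p a) (p b) (p c) (p c')
  obtain ⟨d, hd⟩ := hsurj l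
  subst hd
  have h1 := hm a c d hac (hsymm _ _ hl1) (hsymm _ _ hl3)
  have h2 := hm b c d hbc (hsymm _ _ hl2) (hsymm _ _ hl3)
  have h3 := hm a c' d hac' (hsymm _ _ hl1) (hsymm _ _ hl4)
  have h4 := hm b c' d hbc' (hsymm _ _ hl2) (hsymm _ _ hl4)
  have c1 := hcocycle (p a) (p b) (p c) (p d)
  have c2 := hcocycle (p a) (p b) (p c') (p d)
  linarith
end

section
/- A Leray index associated to a given Sp(n)-invariant 2-cocycle f on Λ(n) is Sp_∞(n)-invariant: m(s_∞ ℓ_∞, s_∞ ℓ'_∞) = m(ℓ_∞, ℓ'_∞) for all s_∞ ∈ Sp_∞(n) and ℓ_∞, ℓ'_∞ ∈ Λ_∞(n). -/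
/-- A Leray index associated to a given `Sp(n)`-invariant 2-cocycle `f` on `Λ(n)` is
`Sp_∞(n)`-invariant: `m(s_∞ℓ_∞, s_∞ℓ'_∞) = m(ℓ_∞, ℓ'_∞)`. Abstractly: `G` (= `Sp_∞(n)`)
acts on the cover `Λ_∞` and on `Λ` compatibly with the projection `p`; a Leray index
associated to `f` is a map `m : Λ_∞² → ℤ` whose coboundary descends to `f` and which is
locally constant on each stratum `{dim(ℓ ∩ ℓ') = k}`, and it is unique with these
properties. Then `m` is `G`-invariant. -/
theorem leray_index_sp_invariant {G Λinf Λ : Type*} [Group G]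
    [TopologicalSpace Λinf] [MulAction G Λinf] [MulAction G Λ]
    (p : Λinf → Λ)
    (hequiv : ∀ (g : G) (a : Λinf), p (g • a) = g • p a)
    (hcontg : ∀ g : G, Continuous (fun a : Λinf => g • a))
    (dimcap : Λ → Λ → ℕ)
    (hdim : ∀ (g : G) (l l' : Λ), dimcap (g • l) (g • l') = dimcap l l')
    (f : Λ → Λ → Λ → ℤ)
    (hinv : ∀ (g : G) (l l' l'' : Λ), f (g • l) (g • l') (g • l'') = f l l' l'')
    (m : Λinf → Λinf → ℤ)
    (hcob : ∀ a b c : Λinf, m a b - m a c + m b c = f (p a) (p b) (p c))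
    (hconst : ∀ k : ℕ, IsLocallyConstant
      (fun q : {q : Λinf × Λinf // dimcap (p q.1) (p q.2) = k} => m q.1.1 q.1.2))
    (huniq : ∀ m' : Λinf → Λinf → ℤ,
      (∀ a b c : Λinf, m' a b - m' a c + m' b c = f (p a) (p b) (p c)) →
      (∀ k : ℕ, IsLocallyConstant
        (fun q : {q : Λinf × Λinf // dimcap (p q.1) (p q.2) = k} => m' q.1.1 q.1.2)) →
      m' = m) :
    ∀ (g : G) (a b : Λinf), m (g • a) (g • b) = m a b := by
  intro g a b
  have key : (fun a b : Λinf => m (g • a) (g • b)) = m := by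
    apply huniq
    · intro a b c
      have := hcob (g • a) (g • b) (g • c)
      simpa [hequiv, hinv] using this
    · intro k
      have hcont : Continuous (fun q : {q : Λinf × Λinf // dimcap (p q.1) (p q.2) = k} =>
          (⟨(g • q.1.1, g • q.1.2), by
            simp [hequiv, hdim, q.2]⟩ :
            {q : Λinf × Λinf // dimcap (p q.1) (p q.2) = k})) := by
        apply Continuous.subtype_mk
        exact ((hcontg g).comp (continuous_fst.comp continuous_subtype_val)).prodMk
          ((hcontg g).comp (continuous_snd.comp continuous_subtype_val))
      exact (hconst k).comp_continuous hcont
  exact congrFun (congrFun key a) b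
end

section
/- For the 1-dimensional harmonic oscillator waveform Ψ_0(θ) = e^{iφ(θ)/ℏ} a(θ) i^{m(θ)} |r dθ|^{1/2} with φ(θ) = (r²/2)(sin θ cos θ − θ) and m(θ) = ⌊θ/π⌋ + 1, the single-valuedness condition Ψ_0(θ + 2π) = Ψ_0(θ) (with a 2π-periodic) holds if and only if r² = (2N+1)ℏ for some integer N ≥ 0, yielding energy levels E_N = (N + 1/2)ℏ for H = (1/2)(p² + x²). -/
/-!
Once around the circle the phase `φ` drops by the enclosed area `π r²` and the Maslov index
`m` rises by `2`, so `Ψ₀(θ + 2π) = -e^{-iπr²/ℏ} Ψ₀(θ)`. As `Ψ₀` does not vanish identically,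
single-valuedness means `e^{-iπr²/ℏ} = -1`, i.e. `r²/ℏ` is an odd integer, which is
nonnegative because `r²/ℏ > 0`.
-/

open Real Complex

theorem Complex.exp_neg_mul_I_eq_neg_one_iff (x : ℝ) :
    exp (-(x * I)) = -1 ↔ ∃ k : ℤ, x = (2 * k + 1) * π := by
  rw [← exp_pi_mul_I, exp_eq_exp_iff_exists_int]
  constructor
  · rintro ⟨n, hn⟩
    refine ⟨-n - 1, ?_⟩
    have : ((x : ℂ) + (2 * n + 1) * π) * I = 0 := by linear_combination -hn
    have : x + (2 * n + 1) * π = 0 := by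
      exact_mod_cast (mul_eq_zero.mp this).resolve_right I_ne_zero
    push_cast; linarith
  · rintro ⟨k, rfl⟩
    exact ⟨-k - 1, by push_cast; ring⟩

theorem exists_nat_eq_two_mul_add_one_iff {q : ℝ} (hq : 0 < q) :
    (∃ k : ℤ, q = 2 * k + 1) ↔ ∃ N : ℕ, q = 2 * N + 1 := by
  constructor
  · rintro ⟨k, rfl⟩
    have hk : 0 ≤ k := by
      have : (0 : ℤ) < 2 * k + 1 := by exact_mod_cast hq
      omega
    exact ⟨k.toNat, by rw [← Int.cast_natCast, Int.toNat_of_nonneg hk]⟩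
  · rintro ⟨N, rfl⟩
    exact ⟨N, by push_cast; rfl⟩

theorem floor_add_two_pi_div_pi (θ : ℝ) : ⌊(θ + 2 * π) / π⌋ = ⌊θ / π⌋ + 2 := by
  rw [add_div, mul_div_cancel_right₀ _ pi_ne_zero]
  exact_mod_cast Int.floor_add_intCast (θ / π) 2

theorem Complex.I_zpow_add_two (n : ℤ) : I ^ (n + 2) = -I ^ n := by
  rw [zpow_add₀ I_ne_zero, zpow_two, I_mul_I, mul_neg_one]

theorem Function.periodic_iff_eq_one_of_add_eq_mul {f : ℝ → ℂ} {T : ℝ} {c : ℂ}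
    (hf : ∀ θ, f (θ + T) = c * f θ) (hne : ∃ θ, f θ ≠ 0) :
    Function.Periodic f T ↔ c = 1 := by
  refine ⟨fun hper => ?_, fun hc θ => by rw [hf, hc, one_mul]⟩
  obtain ⟨θ, hθ⟩ := hne
  exact mul_right_cancel₀ hθ (by rw [← hf, hper, one_mul])

noncomputable def oscillatorWaveform (r ℏ : ℝ) (a : ℝ → ℂ) (θ : ℝ) : ℂ :=
  Complex.exp (Complex.I * ((r ^ 2 / 2 * (Real.sin θ * Real.cos θ - θ) : ℝ) / ℏ)) * a θ
    * Complex.I ^ ((⌊θ / π⌋ + 1 : ℤ)) * (Real.sqrt r : ℂ)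

theorem oscillatorWaveform_add_two_pi (r ℏ : ℝ) {a : ℝ → ℂ}
    (hper : Function.Periodic a (2 * π)) (θ : ℝ) :
    oscillatorWaveform r ℏ a (θ + 2 * π) =
      -exp (-((π * r ^ 2 / ℏ : ℝ) * I)) * oscillatorWaveform r ℏ a θ := by
  have hphase : r ^ 2 / 2 * (Real.sin (θ + 2 * π) * Real.cos (θ + 2 * π) - (θ + 2 * π))
      = r ^ 2 / 2 * (Real.sin θ * Real.cos θ - θ) - π * r ^ 2 := by
    rw [Real.sin_add_two_pi, Real.cos_add_two_pi]; ring
  have hmaslov : I ^ (⌊(θ + 2 * π) / π⌋ + 1) = -I ^ (⌊θ / π⌋ + 1) := by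
    rw [floor_add_two_pi_div_pi, add_right_comm, I_zpow_add_two]
  set φ := r ^ 2 / 2 * (Real.sin θ * Real.cos θ - θ)
  have hexp : exp (I * ((φ - π * r ^ 2 : ℝ) / ℏ)) =
      exp (I * (φ / ℏ)) * exp (-((π * r ^ 2 / ℏ : ℝ) * I)) := by
    rw [← Complex.exp_add]
    congr 1
    push_cast
    ring
  rw [oscillatorWaveform, oscillatorWaveform, hphase, hper, hmaslov, hexp]
  ring

theorem oscillatorWaveform_ne_zero {r : ℝ} (hr : 0 < r) (ℏ : ℝ) {a : ℝ → ℂ} {θ : ℝ}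
    (ha : a θ ≠ 0) : oscillatorWaveform r ℏ a θ ≠ 0 := by
  have hsqrt : (√r : ℂ) ≠ 0 := ofReal_ne_zero.mpr (sqrt_pos.mpr hr).ne'
  unfold oscillatorWaveform
  exact mul_ne_zero (mul_ne_zero (mul_ne_zero (exp_ne_zero _) ha) (zpow_ne_zero _ I_ne_zero)) hsqrt

/-- For the 1-dimensional harmonic oscillator waveform
`Ψ₀(θ) = e^{iφ(θ)/ℏ} a(θ) i^{m(θ)} |r dθ|^{1/2}` with `φ(θ) = (r²/2)(sin θ cos θ − θ)`
and `m(θ) = ⌊θ/π⌋ + 1`, single-valuedness `Ψ₀(θ + 2π) = Ψ₀(θ)` (with `a` 2π-periodic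
and not identically zero) holds if and only if `r² = (2N+1)ℏ` for some `N : ℕ`,
yielding the energy levels `E_N = r²/2 = (N + 1/2)ℏ` of `H = (1/2)(p² + x²)`. -/
theorem harmonic_oscillator_waveform_quantization
    (r ℏ : ℝ) (hr : 0 < r) (hℏ : 0 < ℏ)
    (a : ℝ → ℂ) (hper : ∀ θ, a (θ + 2 * π) = a θ) (hne : ∃ θ, a θ ≠ 0)
    (φ : ℝ → ℝ) (hφ : ∀ θ, φ θ = r ^ 2 / 2 * (Real.sin θ * Real.cos θ - θ))
    (Ψ : ℝ → ℂ)
    (hΨ : ∀ θ, Ψ θ = Complex.exp (Complex.I * (φ θ / ℏ)) * a θ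
        * Complex.I ^ ((⌊θ / π⌋ + 1 : ℤ)) * (Real.sqrt r : ℂ)) :
    (∀ θ, Ψ (θ + 2 * π) = Ψ θ) ↔
      ∃ N : ℕ, r ^ 2 = (2 * N + 1) * ℏ ∧ r ^ 2 / 2 = (N + 1 / 2) * ℏ := by
  obtain rfl : Ψ = oscillatorWaveform r ℏ a :=
    funext fun θ => by rw [hΨ, hφ, oscillatorWaveform]
  obtain ⟨θ, hθ⟩ := hne
  have hq : 0 < r ^ 2 / ℏ := by positivity
  calc Function.Periodic (oscillatorWaveform r ℏ a) (2 * π)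
      ↔ -exp (-((π * r ^ 2 / ℏ : ℝ) * I)) = 1 :=
        Function.periodic_iff_eq_one_of_add_eq_mul (oscillatorWaveform_add_two_pi r ℏ hper)
          ⟨θ, oscillatorWaveform_ne_zero hr ℏ hθ⟩
    _ ↔ ∃ k : ℤ, r ^ 2 / ℏ = 2 * k + 1 := by
        rw [neg_eq_iff_eq_neg, exp_neg_mul_I_eq_neg_one_iff]
        refine exists_congr fun k => ?_
        rw [mul_div_assoc, mul_comm π, mul_left_inj' pi_ne_zero]
    _ ↔ ∃ N : ℕ, r ^ 2 = (2 * N + 1) * ℏ ∧ r ^ 2 / 2 = (N + 1 / 2) * ℏ := by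
        rw [exists_nat_eq_two_mul_add_one_iff hq]
        refine exists_congr fun N => ?_
        rw [div_eq_iff hℏ.ne']
        exact ⟨fun h => ⟨h, by linear_combination h / 2⟩, And.left⟩
end
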